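/- Energy decay for the Galerkin (finite element) scheme (Corollary 5.1): assume time-independent data ℓ ∈ X' and g_h ∈ X with e(g_h) ∈ Ψ_h, and let (u_h^k, φ_h^k) ∈ (g_h + V_h) × Ψ_h, k = 0, …, N, be the solution of the discrete scheme. Then the discrete energies E_h^k := E(u_h^k, φ_h^k) satisfy E_h^k ≤ E_h^{k−1} for all k = 1, …, N. -/

import Mathlib

/-!
Test the equilibrium equation at step `k` with `u^k - u^{k-1} ∈ V_h` and the flow rule with
`φ^k - φ^{k-1}`. Since the energy is a convex quadratic, its increment is bounded by its
derivative at the new state in the direction of the step, and the two tested equations turn that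
derivative into `-(η/τ) ‖φ^k - φ^{k-1}‖² ≤ 0`.
-/

open scoped RealInnerProductSpace

namespace LinearMap

variable {E : Type*} [NormedAddCommGroup E] [InnerProductSpace ℝ E]

theorem IsPositive.inner_map_self_sub_inner_map_self_le {T : E →ₗ[ℝ] E} (hT : T.IsPositive)
    (x y : E) : ⟪T x, x⟫ - ⟪T y, y⟫ ≤ 2 * ⟪T x, x - y⟫ := by
  have hexpand : ⟪T x, x⟫ - ⟪T y, y⟫ = 2 * ⟪T x, x - y⟫ - ⟪T (x - y), x - y⟫ := by
    simp only [map_sub, inner_sub_left, inner_sub_right]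
    linarith [hT.isSymmetric x y, real_inner_comm (T y) x]
  linarith [hT.inner_nonneg_left (x - y)]

end LinearMap

theorem norm_sq_sub_norm_sq_le_two_mul_inner {E : Type*} [NormedAddCommGroup E]
    [InnerProductSpace ℝ E] (x y : E) : ‖x‖ ^ 2 - ‖y‖ ^ 2 ≤ 2 * ⟪x, x - y⟫ := by
  simpa only [LinearMap.id_apply, real_inner_self_eq_norm_sq] using
    (LinearMap.isPositive_id (𝕜 := ℝ) (E := E)).inner_map_self_sub_inner_map_self_le x y

section Energy

variable {X Ψ : Type*} [NormedAddCommGroup X] [InnerProductSpace ℝ X]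
  [NormedAddCommGroup Ψ] [InnerProductSpace ℝ Ψ]

noncomputable def energy (e : X →ₗ[ℝ] Ψ) (C : Ψ →ₗ[ℝ] Ψ) (ℓ : X →ₗ[ℝ] ℝ) (α : ℝ) (u : X) (φ : Ψ) :
    ℝ :=
  (1 / 2) * ⟪C (e u - φ), e u - φ⟫ + (α / 2) * ‖φ‖ ^ 2 - ℓ u

theorem energy_le_of_implicit_step {e : X →ₗ[ℝ] Ψ} {C : Ψ →ₗ[ℝ] Ψ} {ℓ : X →ₗ[ℝ] ℝ}
    (hC : C.IsPositive) {α κ : ℝ} (hα : 0 ≤ α) (hκ : 0 ≤ κ) {u u' : X} {φ φ' : Ψ}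
    (hequil : ⟪C (e u - φ), e (u - u')⟫ = ℓ (u - u'))
    (hflow : C (e u - φ) = κ • (φ - φ') + α • φ) :
    energy e C ℓ α u φ ≤ energy e C ℓ α u' φ' := by
  unfold energy
  set a := e u - φ
  set b := e u' - φ'
  set δ := φ - φ'
  have hab : a - b = e (u - u') - δ := by
    simp only [a, b, δ, map_sub]
    abel
  have hderiv : ⟪C a, a - b⟫ = ℓ (u - u') - κ * ‖δ‖ ^ 2 - α * ⟪φ, δ⟫ := by
    rw [hab, inner_sub_right, hequil, hflow, inner_add_left, real_inner_smul_left,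
      real_inner_smul_left, real_inner_self_eq_norm_sq]
    ring
  have hquad := hC.inner_map_self_sub_inner_map_self_le a b
  have hnorm : α * (‖φ‖ ^ 2 - ‖φ'‖ ^ 2) ≤ α * (2 * ⟪φ, δ⟫) :=
    mul_le_mul_of_nonneg_left (norm_sq_sub_norm_sq_le_two_mul_inner φ φ') hα
  have hdiss : 0 ≤ κ * ‖δ‖ ^ 2 := by positivity
  rw [map_sub ℓ] at hderiv
  linarith

end Energy

theorem stmt_15_general
    {X Ψ : Type*}
    [NormedAddCommGroup X] [InnerProductSpace ℝ X]
    [NormedAddCommGroup Ψ] [InnerProductSpace ℝ Ψ]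
    (e : X →L[ℝ] Ψ) (C : Ψ →L[ℝ] Ψ)
    (hCsym : ∀ φ ψ : Ψ, ⟪C φ, ψ⟫ = ⟪φ, C ψ⟫)
    (cstar : ℝ) (hcstar : 0 < cstar)
    (hCcoer : ∀ ψ : Ψ, cstar * ‖ψ‖ ^ 2 ≤ ⟪C ψ, ψ⟫)
    (η α : ℝ) (hη : 0 < η) (hα : 0 ≤ α)
    (Vh : Submodule ℝ X)
    (τ : ℝ) (hτ : 0 < τ) (N : ℕ)
    (ℓ : X →L[ℝ] ℝ) (gh : X)
    (E : X → Ψ → ℝ)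
    (hE : ∀ u φ, E u φ =
      (1 / 2) * ⟪C (e u - φ), e u - φ⟫ + (α / 2) * ‖φ‖ ^ 2 - ℓ u)
    (u : ℕ → X) (φ : ℕ → Ψ)
    (hmem : ∀ k ≤ N, u k - gh ∈ Vh)
    (heq1 : ∀ k ≤ N, ∀ v ∈ Vh, ⟪C (e (u k) - φ k), e v⟫ = ℓ v)
    (heq2 : ∀ k, 1 ≤ k → k ≤ N →
      (η / τ) • (φ k - φ (k - 1)) + α • φ k - C (e (u k) - φ k) = 0) :
    ∀ k, 1 ≤ k → k ≤ N → E (u k) (φ k) ≤ E (u (k - 1)) (φ (k - 1)) := by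
  intro k hk hkN
  have hC : (C : Ψ →ₗ[ℝ] Ψ).IsPositive :=
    LinearMap.isPositive_iff _ |>.mpr
      ⟨hCsym, fun ψ => (mul_nonneg hcstar.le (sq_nonneg _)).trans (hCcoer ψ)⟩
  have hstep : u k - u (k - 1) ∈ Vh := by
    simpa only [sub_sub_sub_cancel_right] using
      Vh.sub_mem (hmem k hkN) (hmem (k - 1) (k.sub_le 1 |>.trans hkN))
  rw [hE, hE]
  exact energy_le_of_implicit_step (e := e) (ℓ := ℓ) (κ := η / τ) (u := u k) (u' := u (k - 1))
    (φ := φ k) (φ' := φ (k - 1)) hC hα (by positivity)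
    (heq1 k hkN _ hstep) (sub_eq_zero.mp (heq2 k hk hkN)).symm

/-- Energy decay for the Galerkin (finite element) scheme (Corollary 5.1):
for the solution of the discrete scheme with time-independent data, the discrete
energies `E_hᵏ := E(u_hᵏ, φ_hᵏ)` are monotone nonincreasing. -/
theorem stmt_15
    {X Ψ : Type*}
    [NormedAddCommGroup X] [InnerProductSpace ℝ X] [CompleteSpace X]
    [NormedAddCommGroup Ψ] [InnerProductSpace ℝ Ψ] [CompleteSpace Ψ]
    (V : Submodule ℝ X) (hV : IsClosed (V : Set X))
    (e : X →L[ℝ] Ψ) (C : Ψ →L[ℝ] Ψ)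
    (hCsym : ∀ φ ψ : Ψ, ⟪C φ, ψ⟫ = ⟪φ, C ψ⟫)
    (cstar : ℝ) (hcstar : 0 < cstar)
    (hCcoer : ∀ ψ : Ψ, cstar * ‖ψ‖ ^ 2 ≤ ⟪C ψ, ψ⟫)
    (c₀ : ℝ) (hc₀ : 0 < c₀)
    (hacoer : ∀ v ∈ V, c₀ * ‖v‖ ^ 2 ≤ ⟪C (e v), e v⟫)
    (η α : ℝ) (hη : 0 < η) (hα : 0 ≤ α)
    (Vh : Submodule ℝ X) (hVhV : Vh ≤ V) (hVh : IsClosed (Vh : Set X))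
    (Ψh : Submodule ℝ Ψ) (hΨh : IsClosed (Ψh : Set Ψ))
    (he_h : ∀ v ∈ Vh, e v ∈ Ψh)
    (hC_h : ∀ ψ ∈ Ψh, C ψ ∈ Ψh)
    (τ : ℝ) (hτ : 0 < τ) (N : ℕ)
    (ℓ : X →L[ℝ] ℝ) (gh : X) (hgh : e gh ∈ Ψh)
    (E : X → Ψ → ℝ)
    (hE : ∀ u φ, E u φ =
      (1 / 2) * ⟪C (e u - φ), e u - φ⟫ + (α / 2) * ‖φ‖ ^ 2 - ℓ u)
    (u : ℕ → X) (φ : ℕ → Ψ)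
    (hmem : ∀ k ≤ N, u k - gh ∈ Vh)
    (hφmem : ∀ k ≤ N, φ k ∈ Ψh)
    (heq1 : ∀ k ≤ N, ∀ v ∈ Vh, ⟪C (e (u k) - φ k), e v⟫ = ℓ v)
    (heq2 : ∀ k, 1 ≤ k → k ≤ N →
      (η / τ) • (φ k - φ (k - 1)) + α • φ k - C (e (u k) - φ k) = 0) :
    ∀ k, 1 ≤ k → k ≤ N → E (u k) (φ k) ≤ E (u (k - 1)) (φ (k - 1)) :=
  stmt_15_general e C hCsym cstar hcstar hCcoer η α hη hα Vh τ hτ N ℓ gh E hE u φ hmem heq1 heq2
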